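/- For every integer n ≥ 2 and every i ∈ {0,1,...,n−1}, the Hamiltonian H_{i,1}^{(n−i)} := E_{i,1} + V_1^{(n−i)} Poisson-commutes with the function (1/2)p_{n−i}² − q^1, and the Hamiltonian H_{i,1}^{(n−i+1)} := E_{i,1} + V_1^{(n−i+1)} Poisson-commutes with the function (1/2)p_{n−i}² + (q^1)², identically on ℝ^{2n}. -/

import Mathlib

open Matrix

noncomputable section

/-- Phase space ℝ^{2n}: pairs (q, p). -/
abbrev Phase (n : ℕ) := (Fin n → ℝ) × (Fin n → ℝ)

/-- Extended coordinates: `qext n q m` is `q^m` (1-based), with `q^0 := 1`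
and `q^m := 0` for `m < 0` or `m > n`. -/
def qext (n : ℕ) (q : Fin n → ℝ) (m : ℤ) : ℝ :=
  if h : 1 ≤ m ∧ m ≤ (n : ℤ) then q ⟨m.toNat - 1, by omega⟩
  else if m = 0 then 1 else 0

/-- The matrix `L(q)`: first column `-q^j`, superdiagonal `1`, all other entries `0`. -/
def Lmat (n : ℕ) (q : Fin n → ℝ) : Matrix (Fin n) (Fin n) ℝ :=
  Matrix.of fun j k => if (k : ℕ) = 0 then -q j else if (k : ℕ) = (j : ℕ) + 1 then 1 else 0

/-- The contravariant metric `G(q)` with entries `G^{jk} = q^{j+k-n-1}` (1-based indices). -/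
def Gmat (n : ℕ) (q : Fin n → ℝ) : Matrix (Fin n) (Fin n) ℝ :=
  Matrix.of fun j k => qext n q ((j : ℤ) + (k : ℤ) + 1 - (n : ℤ))

/-- The Killing tensors: `K_r = Σ_{k=0}^{r-1} q^k L^{r-1-k}` (so `K_1 = I`). -/
def Kmat (n : ℕ) (q : Fin n → ℝ) (r : ℕ) : Matrix (Fin n) (Fin n) ℝ :=
  ∑ k ∈ Finset.range r, qext n q (k : ℤ) • (Lmat n q) ^ (r - 1 - k)

/-- `E_{i,r}(q,p) = (1/2) Σ_{l,m} (K_r L^i G)^{lm} p_l p_m`. -/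
def Efun (n i r : ℕ) : Phase n → ℝ := fun x =>
  (1 / 2) * ∑ l : Fin n, ∑ m : Fin n,
    (Kmat n x.1 r * (Lmat n x.1) ^ i * Gmat n x.1) l m * x.2 l * x.2 m

/-- Canonical Poisson bracket on `ℝ^{2n}`. -/
def pb (n : ℕ) (f g : Phase n → ℝ) : Phase n → ℝ := fun x =>
  ∑ i : Fin n,
    (fderiv ℝ f x (Pi.single i 1, 0) * fderiv ℝ g x (0, Pi.single i 1)
      - fderiv ℝ f x (0, Pi.single i 1) * fderiv ℝ g x (Pi.single i 1, 0))

/-- Basic separable potentials `V_r^{(m)}` for `m ≥ 0` (first argument is `m`,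
second is the 1-based index `r`): `V_r^{(0)} = 0`, `V_r^{(1)} = -q^r`,
`V_r^{(m+1)} = V_{r+1}^{(m)} + V_r^{(1)} V_1^{(m)}`. -/
def Vpos (n : ℕ) (q : Fin n → ℝ) : ℕ → ℕ → ℝ
  | 0, _ => 0
  | 1, r => -qext n q (r : ℤ)
  | (m + 2), r => Vpos n q (m + 1) (r + 1) + (-qext n q (r : ℤ)) * Vpos n q (m + 1) 1

/-- Basic separable potentials `V_r^{(-m)}` (first argument is `m ≥ 0`, second the
1-based index `r`, with the convention `V_0^{(-m)} = 0`): `V_r^{(-1)} = -q^{r-1}/q^n`,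
`V_r^{(-m-1)} = V_{r-1}^{(-m)} + V_r^{(-1)} V_n^{(-m)}`. -/
def Vneg (n : ℕ) (q : Fin n → ℝ) : ℕ → ℕ → ℝ
  | 0, _ => 0
  | 1, r => if r = 0 then 0 else -qext n q ((r : ℤ) - 1) / qext n q (n : ℤ)
  | (m + 2), r => if r = 0 then 0 else
      Vneg n q (m + 1) (r - 1) + (-qext n q ((r : ℤ) - 1) / qext n q (n : ℤ)) * Vneg n q (m + 1) n

/-- `V_r^{(k)}` for arbitrary integer `k`. -/
def Vk (n : ℕ) (q : Fin n → ℝ) (k : ℤ) (r : ℕ) : ℝ :=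
  if 0 ≤ k then Vpos n q k.toNat r else Vneg n q (-k).toNat r

/-- `H_{i,r}^{(k)} = E_{i,r} + V_r^{(k)}`. -/
def Hfun (n i r : ℕ) (k : ℤ) : Phase n → ℝ := fun x => Efun n i r x + Vk n x.1 k r

-- Auxiliary machinery
variable {n : ℕ} {q : Fin n → ℝ}


lemma qext_zero : qext n q 0 = 1 := by simp [qext]

lemma qext_out {m : ℤ} (h : m < 0 ∨ (n:ℤ) < m) : qext n q m = 0 := by
  unfold qext
  rcases h with h | h
  · rw [dif_neg (by omega), if_neg (by omega)]
  · rw [dif_neg (by omega), if_neg (by omega)]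

lemma qext_nonpos {m : ℤ} (h : m ≤ 0) : qext n q m = if m = 0 then 1 else 0 := by
  rcases eq_or_lt_of_le h with rfl | h
  · simp [qext_zero]
  · rw [qext_out (Or.inl h), if_neg (by omega)]

lemma qext_eq_coord {m : ℤ} (h1 : 1 ≤ m) (h2 : m ≤ (n:ℤ)) :
    qext n q m = q ⟨m.toNat - 1, by omega⟩ := by
  unfold qext
  rw [dif_pos ⟨h1, h2⟩]

lemma qext_coord (j : Fin n) : qext n q (((j:ℕ):ℤ) + 1) = q j := by
  rw [qext_eq_coord (by omega) (by omega)]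
  congr 1

/-- Closed form of `L^i * G` for `i ≤ n-1` (0-based indices `j k`). -/
def Amat (n i : ℕ) (q : Fin n → ℝ) : Matrix (Fin n) (Fin n) ℝ :=
  Matrix.of fun j k =>
    if (j:ℕ) + i + 1 ≤ n ∧ (k:ℕ) + i + 1 ≤ n then
      qext n q ((j:ℤ) + (k:ℤ) + 1 + (i:ℤ) - (n:ℤ))
    else if n < (j:ℕ) + i + 1 ∧ n < (k:ℕ) + i + 1 then
      -qext n q ((j:ℤ) + (k:ℤ) + 1 + (i:ℤ) - (n:ℤ))
    else 0

lemma Amat_zero : Amat n 0 q = Gmat n q := by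
  ext j k
  simp only [Amat, Gmat, Matrix.of_apply]
  rw [if_pos ⟨by omega, by omega⟩]
  ring_nf

lemma Amat_row (hi : i < n) (hn0 : 0 < n) (k : Fin n) :
    Amat n i q ⟨0, hn0⟩ k = if (k:ℕ) + i + 1 = n then 1 else 0 := by
  simp only [Amat, Matrix.of_apply]
  by_cases hk : (k:ℕ) + i + 1 ≤ n
  · rw [if_pos ⟨by simp; omega, hk⟩]
    rw [qext_nonpos (by simp; omega)]
    by_cases h : (k:ℕ) + i + 1 = n
    · rw [if_pos (by push_cast; omega), if_pos h]
    · rw [if_neg (by push_cast; omega), if_neg h]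
  · rw [if_neg (by push_neg; intro h; omega), if_neg (by push_neg; intro h; omega),
      if_neg (by omega)]

lemma Amat_col (hi : i < n) (hn0 : 0 < n) (k : Fin n) :
    Amat n i q k ⟨0, hn0⟩ = if (k:ℕ) + i + 1 = n then 1 else 0 := by
  simp only [Amat, Matrix.of_apply]
  by_cases hk : (k:ℕ) + i + 1 ≤ n
  · rw [if_pos ⟨hk, by simp; omega⟩]
    rw [qext_nonpos (by simp; omega)]
    by_cases h : (k:ℕ) + i + 1 = n
    · rw [if_pos (by push_cast; omega), if_pos h]
    · rw [if_neg (by push_cast; omega), if_neg h]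
  · rw [if_neg (by push_neg; intro h; omega), if_neg (by push_neg; intro h; omega),
      if_neg (by omega)]

lemma Lmat_mul (B : Matrix (Fin n) (Fin n) ℝ) (j k : Fin n) :
    (Lmat n q * B) j k =
      -(q j) * B ⟨0, j.pos⟩ k +
        (if hj : (j:ℕ) + 1 < n then B ⟨(j:ℕ)+1, hj⟩ k else 0) := by
  have hn0 : 0 < n := j.pos
  rw [Matrix.mul_apply]
  by_cases hj : (j:ℕ) + 1 < n
  · rw [dif_pos hj]
    have hsum : ∀ m : Fin n, Lmat n q j m * B m k =
        (if m = ⟨0, hn0⟩ then -(q j) * B ⟨0, hn0⟩ k else 0) +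
          (if m = ⟨(j:ℕ)+1, hj⟩ then B ⟨(j:ℕ)+1, hj⟩ k else 0) := by
      intro m
      simp only [Lmat, Matrix.of_apply]
      by_cases h1 : (m:ℕ) = 0
      · have hm : m = ⟨0, hn0⟩ := Fin.ext h1
        subst hm
        rw [if_pos h1, if_pos rfl,
          if_neg (fun hcon => by apply_fun Fin.val at hcon; simp at hcon), add_zero]
      · by_cases h2 : (m:ℕ) = (j:ℕ) + 1
        · have hm : m = ⟨(j:ℕ)+1, hj⟩ := Fin.ext h2
          subst hm
          rw [if_neg h1, if_pos h2,
            if_neg (fun hcon => by apply_fun Fin.val at hcon; simp at hcon),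
            if_pos rfl, one_mul, zero_add]
        · rw [if_neg h1, if_neg h2, zero_mul, if_neg (fun hcon => h1 (by rw [hcon])),
            if_neg (fun hcon => h2 (by rw [hcon]))]
          ring
    rw [Finset.sum_congr rfl (fun m _ => hsum m), Finset.sum_add_distrib,
      Finset.sum_ite_eq' Finset.univ, Finset.sum_ite_eq' Finset.univ,
      if_pos (Finset.mem_univ _), if_pos (Finset.mem_univ _)]
  · rw [dif_neg hj]
    have hsum : ∀ m : Fin n, Lmat n q j m * B m k =
        (if m = ⟨0, hn0⟩ then -(q j) * B ⟨0, hn0⟩ k else 0) := by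
      intro m
      simp only [Lmat, Matrix.of_apply]
      by_cases h1 : (m:ℕ) = 0
      · have hm : m = ⟨0, hn0⟩ := Fin.ext h1
        subst hm
        rw [if_pos h1, if_pos rfl]
      · rw [if_neg h1, if_neg (show ¬(m:ℕ) = (j:ℕ)+1 from by have := m.isLt; omega),
          zero_mul, if_neg (fun hcon => h1 (by rw [hcon]))]
    rw [Finset.sum_congr rfl (fun m _ => hsum m), Finset.sum_ite_eq' Finset.univ,
      if_pos (Finset.mem_univ _), add_zero]

lemma qext_congr {a b : ℤ} (h : a = b) : qext n q a = qext n q b := by rw [h]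

lemma Lmat_mul_Amat {i : ℕ} (hi : i + 1 < n) :
    Lmat n q * Amat n i q = Amat n (i+1) q := by
  ext j k
  rw [Lmat_mul, Amat_row (by omega) j.pos k]
  simp only [Amat, Matrix.of_apply, Fin.val_mk]
  by_cases hj1 : (j:ℕ) + 1 < n
  · rw [dif_pos hj1]
    by_cases hk : (k:ℕ) + i + 1 = n
    · rw [if_pos hk, mul_one]
      by_cases hjt : (j:ℕ) + i + 2 ≤ n
      · -- J1K2: cancellation
        rw [if_pos ⟨by omega, by omega⟩, if_neg (by omega), if_neg (by omega)]
        rw [qext_congr (show ((((j:ℕ)+1:ℕ)):ℤ) + (k:ℕ) + 1 + (i:ℤ) - (n:ℤ)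
              = ((j:ℕ):ℤ) + 1 by push_cast; omega), qext_coord j]
        try ring
      · -- J2K2 or J3K2
        rw [if_neg (by omega), if_neg (by omega), if_neg (by omega),
          if_pos ⟨by omega, by omega⟩]
        rw [qext_congr (show ((j:ℕ):ℤ) + (k:ℕ) + 1 + ((i:ℕ)+1:ℕ) - (n:ℤ)
              = ((j:ℕ):ℤ) + 1 by push_cast; omega), qext_coord j]
        try ring
    · rw [if_neg hk, mul_zero, zero_add]
      by_cases hkt : (k:ℕ) + i + 1 ≤ n
      · -- K1 : k strictly top
        by_cases hjt : (j:ℕ) + i + 2 ≤ n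
        · rw [if_pos ⟨by omega, by omega⟩, if_pos ⟨by omega, by omega⟩]
          exact qext_congr (by push_cast; omega)
        · rw [if_neg (by omega), if_neg (by omega), if_neg (by omega), if_neg (by omega)]
      · -- K3 : k bottom
        by_cases hjt : (j:ℕ) + i + 2 ≤ n
        · rw [if_neg (by omega), if_neg (by omega), if_neg (by omega), if_neg (by omega)]
        · rw [if_neg (by omega), if_pos ⟨by omega, by omega⟩, if_neg (by omega),
            if_pos ⟨by omega, by omega⟩]
          rw [qext_congr (show ((((j:ℕ)+1:ℕ)):ℤ) + (k:ℕ) + 1 + (i:ℤ) - (n:ℤ)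
              = ((j:ℕ):ℤ) + (k:ℕ) + 1 + ((i:ℕ)+1:ℕ) - (n:ℤ) by push_cast; omega)]
  · rw [dif_neg hj1, add_zero]
    have hjn : (j:ℕ) = n - 1 := by omega
    by_cases hk : (k:ℕ) + i + 1 = n
    · rw [if_pos hk, mul_one]
      -- j = n-1: i+... j bottom or boundary; k boundary for level i ⇒ RHS bottom block
      rw [if_neg (by omega), if_pos ⟨by omega, by omega⟩]
      rw [qext_congr (show ((j:ℕ):ℤ) + (k:ℕ) + 1 + ((i:ℕ)+1:ℕ) - (n:ℤ)
            = ((j:ℕ):ℤ) + 1 by push_cast; omega), qext_coord j]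
      try ring
    · rw [if_neg hk, mul_zero]
      by_cases hkt : (k:ℕ) + i + 1 ≤ n
      · rw [if_neg (by omega), if_neg (by omega)]
      · rw [if_neg (by omega), if_pos ⟨by omega, by omega⟩]
        rw [qext_out (by push_cast; omega)]
        ring

lemma pow_mul_G {i : ℕ} (hi : i < n) : Lmat n q ^ i * Gmat n q = Amat n i q := by
  induction i with
  | zero => rw [pow_zero, one_mul, Amat_zero]
  | succ i ih =>
    rw [pow_succ', mul_assoc, ih (by omega), Lmat_mul_Amat hi]

lemma Kmat_one : Kmat n q 1 = 1 := by
  simp [Kmat, qext_zero]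

lemma Efun_eq {i : ℕ} (hi : i < n) :
    Efun n i 1 = fun x =>
      (1 / 2) * ∑ l : Fin n, ∑ m : Fin n, Amat n i x.1 l m * x.2 l * x.2 m := by
  funext x
  unfold Efun
  rw [Kmat_one, one_mul, pow_mul_G hi]

lemma qext_hasFDerivAt (c : ℤ) (q : Fin n → ℝ) :
    ∃ d : (Fin n → ℝ) →L[ℝ] ℝ, HasFDerivAt (fun q' : Fin n → ℝ => qext n q' c) d q ∧
      ∀ j : Fin n, d (Pi.single j 1) = if ((j:ℕ):ℤ) + 1 = c then 1 else 0 := by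
  by_cases h : 1 ≤ c ∧ c ≤ (n:ℤ)
  · refine ⟨ContinuousLinearMap.proj ⟨c.toNat - 1, by omega⟩, ?_, ?_⟩
    · have heq : (fun q' : Fin n → ℝ => qext n q' c)
          = fun q' => q' ⟨c.toNat - 1, by omega⟩ := by
        funext q'
        rw [qext_eq_coord h.1 h.2]
      rw [heq]
      exact (ContinuousLinearMap.proj (R := ℝ) (φ := fun _ : Fin n => ℝ)
        ⟨c.toNat - 1, by omega⟩).hasFDerivAt
    · intro j
      rw [ContinuousLinearMap.proj_apply, Pi.single_apply]
      by_cases hj : ((j:ℕ):ℤ) + 1 = c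
      · rw [if_pos (Fin.ext (by simp only [Fin.val_mk]; omega)), if_pos hj]
      · rw [if_neg (fun hcon => hj (by apply_fun Fin.val at hcon; simp at hcon; omega)),
          if_neg hj]
  · refine ⟨0, ?_, ?_⟩
    · have heq : (fun q' : Fin n → ℝ => qext n q' c)
          = fun _ => (if c = 0 then (1:ℝ) else 0) := by
        funext q'
        unfold qext
        rw [dif_neg h]
      rw [heq]
      exact hasFDerivAt_const _ _
    · intro j
      rw [ContinuousLinearMap.zero_apply, if_neg (by have := j.isLt; omega)]

lemma Amat_entry_deriv {i : ℕ} (hi : i < n) (l m : Fin n) (q : Fin n → ℝ) :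
    ∃ d : (Fin n → ℝ) →L[ℝ] ℝ, HasFDerivAt (fun q' => Amat n i q' l m) d q ∧
      d (Pi.single ⟨n - i - 1, by have h := hi; omega⟩ 1) = 0 := by
  by_cases c1 : (l:ℕ) + i + 1 ≤ n ∧ (m:ℕ) + i + 1 ≤ n
  · obtain ⟨d, hd, he⟩ := qext_hasFDerivAt ((l:ℤ) + (m:ℤ) + 1 + (i:ℤ) - (n:ℤ)) q
    refine ⟨d, ?_, ?_⟩
    · have heq : (fun q' => Amat n i q' l m)
          = fun q' => qext n q' ((l:ℤ) + (m:ℤ) + 1 + (i:ℤ) - (n:ℤ)) := by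
        funext q'
        simp only [Amat, Matrix.of_apply]
        rw [if_pos c1]
      rw [heq]; exact hd
    · rw [he, if_neg (by simp only [Fin.val_mk]; omega)]
  · by_cases c2 : n < (l:ℕ) + i + 1 ∧ n < (m:ℕ) + i + 1
    · obtain ⟨d, hd, he⟩ := qext_hasFDerivAt ((l:ℤ) + (m:ℤ) + 1 + (i:ℤ) - (n:ℤ)) q
      refine ⟨-d, ?_, ?_⟩
      · have heq : (fun q' => Amat n i q' l m)
            = fun q' => -qext n q' ((l:ℤ) + (m:ℤ) + 1 + (i:ℤ) - (n:ℤ)) := by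
          funext q'
          simp only [Amat, Matrix.of_apply]
          rw [if_neg c1, if_pos c2]
        rw [heq]; exact hd.neg
      · rw [ContinuousLinearMap.neg_apply, he, if_neg (by simp only [Fin.val_mk]; omega), neg_zero]
    · refine ⟨0, ?_, ContinuousLinearMap.zero_apply _⟩
      have heq : (fun q' => Amat n i q' l m) = fun _ => (0:ℝ) := by
        funext q'
        simp only [Amat, Matrix.of_apply]
        rw [if_neg c1, if_neg c2]
      rw [heq]
      exact hasFDerivAt_const _ _

lemma Vpos_deriv {m0 : ℕ} (hm1 : 1 ≤ m0) (hmn : m0 ≤ n) (q : Fin n → ℝ) :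
    ∀ M r : ℕ, 1 ≤ r → ∃ d : (Fin n → ℝ) →L[ℝ] ℝ,
      HasFDerivAt (fun q' => Vpos n q' M r) d q ∧
      (r + M ≤ m0 → d (Pi.single ⟨m0 - 1, by omega⟩ 1) = 0) ∧
      (1 ≤ M → m0 + 1 = r + M → d (Pi.single ⟨m0 - 1, by omega⟩ 1) = -1) ∧
      (1 ≤ M → m0 + 2 = r + M → d (Pi.single ⟨m0 - 1, by omega⟩ 1)
          = if M = 1 then 0 else (if r = 1 then 2 else 1) * qext n q 1) := by
  intro M
  induction M with
  | zero =>
    intro r hr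
    refine ⟨0, ?_, fun _ => ContinuousLinearMap.zero_apply _, fun h => by omega,
      fun h => by omega⟩
    have heq : (fun q' : Fin n → ℝ => Vpos n q' 0 r) = fun _ => (0:ℝ) := by
      funext q'; simp [Vpos]
    rw [heq]; exact hasFDerivAt_const _ _
  | succ M ih =>
    match M, ih with
    | 0, _ =>
      intro r hr
      obtain ⟨d, hd, he⟩ := qext_hasFDerivAt (r:ℤ) q
      have heq : (fun q' : Fin n → ℝ => Vpos n q' 1 r) = fun q' => -qext n q' (r:ℤ) := by
        funext q'; simp [Vpos]
      refine ⟨-d, by rw [heq]; exact hd.neg, ?_, ?_, ?_⟩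
      · intro h
        rw [ContinuousLinearMap.neg_apply, he, if_neg (by simp only [Fin.val_mk]; omega), neg_zero]
      · intro _ h
        rw [ContinuousLinearMap.neg_apply, he, if_pos (by simp only [Fin.val_mk]; omega)]
      · intro _ h
        rw [ContinuousLinearMap.neg_apply, he, if_neg (by simp only [Fin.val_mk]; omega), neg_zero,
          if_pos rfl]
    | (M+1), ih =>
      intro r hr
      obtain ⟨d1, hd1, c11, c21, c31⟩ := ih (r+1) (by omega)
      obtain ⟨d2, hd2, c12, c22, c32⟩ := ih 1 (by omega)
      obtain ⟨dq, hdq, heq⟩ := qext_hasFDerivAt (r:ℤ) q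
      have hfun : (fun q' : Fin n → ℝ => Vpos n q' (M+2) r)
          = fun q' => Vpos n q' (M+1) (r+1) + (-qext n q' (r:ℤ)) * Vpos n q' (M+1) 1 := by
        funext q'; rw [Vpos]
      refine ⟨d1 + ((-qext n q (r:ℤ)) • d2 + (Vpos n q (M+1) 1) • (-dq)), ?_, ?_, ?_, ?_⟩
      · rw [hfun]
        exact hd1.add ((hdq.neg).mul hd2)
      · intro h
        simp only [ContinuousLinearMap.add_apply, ContinuousLinearMap.smul_apply,
          ContinuousLinearMap.neg_apply, smul_eq_mul]
        rw [c11 (by omega), heq, if_neg (by simp only [Fin.val_mk]; omega), c12 (by omega)]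
        ring
      · intro _ h
        simp only [ContinuousLinearMap.add_apply, ContinuousLinearMap.smul_apply,
          ContinuousLinearMap.neg_apply, smul_eq_mul]
        rw [c21 (by omega) (by omega), heq, if_neg (by simp only [Fin.val_mk]; omega), c12 (by omega)]
        ring
      · intro _ h
        simp only [ContinuousLinearMap.add_apply, ContinuousLinearMap.smul_apply,
          ContinuousLinearMap.neg_apply, smul_eq_mul]
        rw [if_neg (show ¬(M + 1 + 1 = 1) by omega)]
        have hV11 : Vpos n q 1 1 = -qext n q 1 := by
          simp [Vpos]
        by_cases hM : M = 0
        · subst hM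
          rw [c31 (by omega) (by omega), if_pos rfl, heq,
            if_pos (by simp only [Fin.val_mk]; omega), hV11]
          by_cases hr1 : r = 1
          · rw [c22 (by omega) (by omega), if_pos hr1]
            subst hr1
            rw [show ((1:ℕ):ℤ) = (1:ℤ) by norm_num]
            ring
          · rw [c12 (by omega), if_neg hr1]
            ring
        · rw [c31 (by omega) (by omega), if_neg (by omega), if_neg (by omega), heq,
            if_neg (by simp only [Fin.val_mk]; omega)]
          by_cases hr1 : r = 1
          · rw [c22 (by omega) (by omega), if_pos hr1]
            subst hr1
            rw [show ((1:ℕ):ℤ) = (1:ℤ) by norm_num]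
            ring
          · rw [c12 (by omega), if_neg hr1]
            ring

lemma Efun_deriv (hn0 : 0 < n) {i : ℕ} (hi : i < n) (x : Phase n) :
    ∃ D : Phase n →L[ℝ] ℝ, HasFDerivAt (Efun n i 1) D x ∧
      D (Pi.single ⟨n - i - 1, by have h := hi; omega⟩ 1, 0) = 0 ∧
      D (0, Pi.single ⟨0, hn0⟩ 1) = x.2 ⟨n - i - 1, by have h := hi; omega⟩ := by
  classical
  have hA := fun (l m : Fin n) => Amat_entry_deriv hi l m x.1
  choose d hd hval using hA
  let Pp : Fin n → (Phase n →L[ℝ] ℝ) := fun l =>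
    (ContinuousLinearMap.proj l).comp (ContinuousLinearMap.snd ℝ (Fin n → ℝ) (Fin n → ℝ))
  let Fst : Phase n →L[ℝ] (Fin n → ℝ) := ContinuousLinearMap.fst ℝ (Fin n → ℝ) (Fin n → ℝ)
  have hp : ∀ l : Fin n, HasFDerivAt (fun y : Phase n => y.2 l) (Pp l) x := fun l =>
    ((ContinuousLinearMap.proj l).comp (ContinuousLinearMap.snd ℝ (Fin n → ℝ) (Fin n → ℝ))).hasFDerivAt
  have hAq : ∀ l m : Fin n, HasFDerivAt (fun y : Phase n => Amat n i y.1 l m)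
      ((d l m).comp Fst) x := fun l m => (hd l m).comp x hasFDerivAt_fst
  have hsum : HasFDerivAt
      (fun y : Phase n => ∑ l : Fin n, ∑ m : Fin n, Amat n i y.1 l m * y.2 l * y.2 m)
      (∑ l : Fin n, ∑ m : Fin n,
        ((Amat n i x.1 l m * x.2 l) • Pp m +
          x.2 m • ((Amat n i x.1 l m) • Pp l + x.2 l • ((d l m).comp Fst)))) x :=
    HasFDerivAt.fun_sum (fun l _ => HasFDerivAt.fun_sum (fun m _ => ((hAq l m).mul (hp l)).mul (hp m)))
  have hE : HasFDerivAt (Efun n i 1) ((1/2 : ℝ) •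
      (∑ l : Fin n, ∑ m : Fin n,
        ((Amat n i x.1 l m * x.2 l) • Pp m +
          x.2 m • ((Amat n i x.1 l m) • Pp l + x.2 l • ((d l m).comp Fst))))) x := by
    rw [Efun_eq hi]
    exact hsum.const_mul (1/2)
  refine ⟨_, hE, ?_, ?_⟩
  · simp only [ContinuousLinearMap.smul_apply, ContinuousLinearMap.sum_apply,
      ContinuousLinearMap.add_apply, smul_eq_mul, ContinuousLinearMap.comp_apply,
      ContinuousLinearMap.coe_fst', ContinuousLinearMap.coe_snd',
      ContinuousLinearMap.proj_apply, Pp, Fst]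
    simp [hval]
  · simp only [ContinuousLinearMap.smul_apply, ContinuousLinearMap.sum_apply,
      ContinuousLinearMap.add_apply, smul_eq_mul, ContinuousLinearMap.comp_apply,
      ContinuousLinearMap.coe_fst', ContinuousLinearMap.coe_snd',
      ContinuousLinearMap.proj_apply, Pp, Fst]
    simp only [ContinuousLinearMap.map_zero, mul_zero, add_zero, Pi.single_apply]
    have hterm : ∀ l m : Fin n,
        Amat n i x.1 l m * x.2 l * (if m = (⟨0, hn0⟩ : Fin n) then (1:ℝ) else 0) +
          x.2 m * (Amat n i x.1 l m * (if l = (⟨0, hn0⟩ : Fin n) then (1:ℝ) else 0)) =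
        (if m = (⟨0, hn0⟩ : Fin n) then Amat n i x.1 l m * x.2 l else 0) +
          (if l = (⟨0, hn0⟩ : Fin n) then Amat n i x.1 l m * x.2 m else 0) := by
      intro l m
      split_ifs <;> ring
    have hrow : (∑ l : Fin n, (if (l:ℕ) + i + 1 = n then (1:ℝ) else 0) * x.2 l)
        = x.2 ⟨n - i - 1, by have h := hi; omega⟩ := by
      have ht : ∀ l : Fin n, (if (l:ℕ) + i + 1 = n then (1:ℝ) else 0) * x.2 l
          = if l = (⟨n - i - 1, by have h := hi; omega⟩ : Fin n) then x.2 l else 0 := by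
        intro l
        by_cases hc : (l:ℕ) + i + 1 = n
        · rw [if_pos hc, if_pos (Fin.ext (by simp only [Fin.val_mk]; omega)), one_mul]
        · rw [if_neg hc, if_neg (fun hcon => hc (by
            apply_fun Fin.val at hcon; simp only [Fin.val_mk] at hcon; omega)), zero_mul]
      rw [Finset.sum_congr rfl (fun l _ => ht l), Finset.sum_ite_eq' Finset.univ,
        if_pos (Finset.mem_univ _)]
    have hz2 : ∀ l : Fin n, (∑ m : Fin n,
        if l = (⟨0, hn0⟩ : Fin n) then Amat n i x.1 l m * x.2 m else 0)
        = if l = (⟨0, hn0⟩ : Fin n) then (∑ m : Fin n, Amat n i x.1 l m * x.2 m) else 0 := by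
      intro l
      split_ifs with h
      · rfl
      · exact Finset.sum_const_zero
    rw [Finset.sum_congr rfl (fun l _ => by
      rw [Finset.sum_congr rfl (fun m _ => hterm l m), Finset.sum_add_distrib,
        Finset.sum_ite_eq' Finset.univ, if_pos (Finset.mem_univ _), hz2 l])]
    rw [Finset.sum_add_distrib, Finset.sum_ite_eq' Finset.univ, if_pos (Finset.mem_univ _)]
    have e1 : (∑ l : Fin n, Amat n i x.1 l ⟨0, hn0⟩ * x.2 l) = x.2 ⟨n - i - 1, by have h := hi; omega⟩ := by
      rw [Finset.sum_congr rfl (fun l _ => by rw [Amat_col hi hn0 l])]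
      exact hrow
    have e2 : (∑ m : Fin n, Amat n i x.1 ⟨0, hn0⟩ m * x.2 m) = x.2 ⟨n - i - 1, by have h := hi; omega⟩ := by
      rw [Finset.sum_congr rfl (fun m _ => by rw [Amat_row hi hn0 m])]
      exact hrow
    rw [e1, e2]
    ring


/-- for `i ∈ {0,…,n−1}`, the Hamiltonian
`H_{i,1}^{(n−i)} = E_{i,1} + V_1^{(n−i)}` Poisson-commutes with
`(1/2) p_{n−i}² − q^1`, and `H_{i,1}^{(n−i+1)} = E_{i,1} + V_1^{(n−i+1)}`
Poisson-commutes with `(1/2) p_{n−i}² + (q^1)²`, identically on `ℝ^{2n}`. -/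

theorem Hfun_commutes_cubic_generators (n : ℕ) (hn : 2 ≤ n) (i : ℕ) (hi : i < n)
    (x : Phase n) :
    pb n (Hfun n i 1 ((n : ℤ) - i))
      (fun y => (1 / 2) * (y.2 ⟨n - i - 1, by omega⟩) ^ 2 - y.1 ⟨0, by omega⟩) x = 0 ∧
    pb n (Hfun n i 1 ((n : ℤ) - i + 1))
      (fun y => (1 / 2) * (y.2 ⟨n - i - 1, by omega⟩) ^ 2 + (y.1 ⟨0, by omega⟩) ^ 2) x
        = 0 := by
  classical
  have hn0 : 0 < n := by omega
  -- CLM atoms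
  let Pp : Fin n → (Phase n →L[ℝ] ℝ) := fun l =>
    (ContinuousLinearMap.proj l).comp (ContinuousLinearMap.snd ℝ (Fin n → ℝ) (Fin n → ℝ))
  let Pq : Fin n → (Phase n →L[ℝ] ℝ) := fun l =>
    (ContinuousLinearMap.proj l).comp (ContinuousLinearMap.fst ℝ (Fin n → ℝ) (Fin n → ℝ))
  let Fst : Phase n →L[ℝ] (Fin n → ℝ) := ContinuousLinearMap.fst ℝ (Fin n → ℝ) (Fin n → ℝ)
  have hp : ∀ l : Fin n, HasFDerivAt (fun y : Phase n => y.2 l) (Pp l) x := fun l =>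
    ((ContinuousLinearMap.proj l).comp (ContinuousLinearMap.snd ℝ (Fin n → ℝ) (Fin n → ℝ))).hasFDerivAt
  have hq : ∀ l : Fin n, HasFDerivAt (fun y : Phase n => y.1 l) (Pq l) x := fun l =>
    ((ContinuousLinearMap.proj l).comp (ContinuousLinearMap.fst ℝ (Fin n → ℝ) (Fin n → ℝ))).hasFDerivAt
  -- E derivative
  obtain ⟨DE, hDE, hDE1, hDE2⟩ := Efun_deriv hn0 hi x
  -- V derivatives
  obtain ⟨dV1, hdV1, cV1a, cV1b, cV1c⟩ :=
    Vpos_deriv (m0 := n - i) (by omega) (by omega) x.1 (n - i) 1 le_rfl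
  obtain ⟨dV2, hdV2, cV2a, cV2b, cV2c⟩ :=
    Vpos_deriv (m0 := n - i) (by omega) (by omega) x.1 (n - i + 1) 1 le_rfl
  have hval1 : dV1 (Pi.single ⟨n - i - 1, by omega⟩ 1) = -1 := cV1b (by omega) (by omega)
  have hval2 : dV2 (Pi.single ⟨n - i - 1, by omega⟩ 1) = 2 * qext n x.1 1 := by
    rw [cV2c (by omega) (by omega), if_neg (by omega), if_pos rfl]
  -- Hamiltonian derivatives
  have hVk1 : (fun y : Phase n => Vk n y.1 ((n:ℤ) - i) 1)
      = fun y => Vpos n y.1 (n - i) 1 := by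
    funext y
    unfold Vk
    rw [if_pos (by omega), show ((n:ℤ) - i).toNat = n - i from by omega]
  have hVk2 : (fun y : Phase n => Vk n y.1 ((n:ℤ) - i + 1) 1)
      = fun y => Vpos n y.1 (n - i + 1) 1 := by
    funext y
    unfold Vk
    rw [if_pos (by omega), show ((n:ℤ) - i + 1).toNat = n - i + 1 from by omega]
  have hH1 : HasFDerivAt (Hfun n i 1 ((n:ℤ) - i)) (DE + dV1.comp Fst) x := by
    have hv : HasFDerivAt (fun y : Phase n => Vk n y.1 ((n:ℤ) - i) 1) (dV1.comp Fst) x := by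
      rw [hVk1]
      exact hdV1.comp x hasFDerivAt_fst
    exact hDE.add hv
  have hH2 : HasFDerivAt (Hfun n i 1 ((n:ℤ) - i + 1)) (DE + dV2.comp Fst) x := by
    have hv : HasFDerivAt (fun y : Phase n => Vk n y.1 ((n:ℤ) - i + 1) 1) (dV2.comp Fst) x := by
      rw [hVk2]
      exact hdV2.comp x hasFDerivAt_fst
    exact hDE.add hv
  -- g derivatives
  have hg1 : HasFDerivAt
      (fun y : Phase n => (1 / 2 : ℝ) * (y.2 ⟨n - i - 1, by omega⟩) ^ 2 - y.1 ⟨0, by omega⟩)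
      ((1/2 : ℝ) • (x.2 ⟨n - i - 1, by omega⟩ • Pp ⟨n - i - 1, by omega⟩
          + x.2 ⟨n - i - 1, by omega⟩ • Pp ⟨n - i - 1, by omega⟩) - Pq ⟨0, by omega⟩) x := by
    have hsq : (fun y : Phase n =>
          (1 / 2 : ℝ) * (y.2 ⟨n - i - 1, by omega⟩) ^ 2 - y.1 ⟨0, by omega⟩)
        = fun y : Phase n => (1 / 2 : ℝ) * (y.2 ⟨n - i - 1, by omega⟩ * y.2 ⟨n - i - 1, by omega⟩)
            - y.1 ⟨0, by omega⟩ := by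
      funext y
      ring
    rw [hsq]
    exact ((((hp _).mul (hp _))).const_mul (1/2)).sub (hq _)
  have hg2 : HasFDerivAt
      (fun y : Phase n => (1 / 2 : ℝ) * (y.2 ⟨n - i - 1, by omega⟩) ^ 2 + (y.1 ⟨0, by omega⟩) ^ 2)
      ((1/2 : ℝ) • (x.2 ⟨n - i - 1, by omega⟩ • Pp ⟨n - i - 1, by omega⟩
          + x.2 ⟨n - i - 1, by omega⟩ • Pp ⟨n - i - 1, by omega⟩)
        + (x.1 ⟨0, by omega⟩ • Pq ⟨0, by omega⟩ + x.1 ⟨0, by omega⟩ • Pq ⟨0, by omega⟩)) x := by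
    have hsq : (fun y : Phase n =>
          (1 / 2 : ℝ) * (y.2 ⟨n - i - 1, by omega⟩) ^ 2 + (y.1 ⟨0, by omega⟩) ^ 2)
        = fun y : Phase n => (1 / 2 : ℝ) * (y.2 ⟨n - i - 1, by omega⟩ * y.2 ⟨n - i - 1, by omega⟩)
            + y.1 ⟨0, by omega⟩ * y.1 ⟨0, by omega⟩ := by
      funext y
      ring
    rw [hsq]
    exact ((((hp _).mul (hp _))).const_mul (1/2)).add ((hq _).mul (hq _))
  constructor
  · -- first bracket
    simp only [pb]
    rw [hH1.fderiv, hg1.fderiv]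
    have hsummand : ∀ j : Fin n,
        (DE + dV1.comp Fst) (Pi.single j 1, 0) *
            ((1/2 : ℝ) • (x.2 ⟨n - i - 1, by omega⟩ • Pp ⟨n - i - 1, by omega⟩
              + x.2 ⟨n - i - 1, by omega⟩ • Pp ⟨n - i - 1, by omega⟩) - Pq ⟨0, by omega⟩)
              (0, Pi.single j 1)
          - (DE + dV1.comp Fst) (0, Pi.single j 1) *
            ((1/2 : ℝ) • (x.2 ⟨n - i - 1, by omega⟩ • Pp ⟨n - i - 1, by omega⟩
              + x.2 ⟨n - i - 1, by omega⟩ • Pp ⟨n - i - 1, by omega⟩) - Pq ⟨0, by omega⟩)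
              (Pi.single j 1, 0)
        = (if (⟨n - i - 1, by omega⟩ : Fin n) = j then
              (DE (Pi.single ⟨n - i - 1, by omega⟩ 1, 0)
                + dV1 (Pi.single ⟨n - i - 1, by omega⟩ 1)) * x.2 ⟨n - i - 1, by omega⟩ else 0)
          + (if (⟨0, by omega⟩ : Fin n) = j then DE (0, Pi.single ⟨0, by omega⟩ 1) else 0) := by
      intro j
      simp only [ContinuousLinearMap.add_apply, ContinuousLinearMap.sub_apply,
        ContinuousLinearMap.smul_apply, ContinuousLinearMap.comp_apply,
        ContinuousLinearMap.coe_fst', ContinuousLinearMap.coe_snd',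
        ContinuousLinearMap.proj_apply, smul_eq_mul, map_zero, Pi.single_apply,
        Pi.zero_apply, Pp, Pq, Fst]
      by_cases h1 : (⟨n - i - 1, by omega⟩ : Fin n) = j
      · by_cases h2 : (⟨0, by omega⟩ : Fin n) = j
        · simp only [if_pos h1, if_pos h2]
          rw [h2.trans h1.symm, ← h1]
          ring
        · simp only [if_pos h1, if_neg h2]
          rw [← h1]
          ring
      · by_cases h2 : (⟨0, by omega⟩ : Fin n) = j
        · simp only [if_neg h1, if_pos h2]
          rw [← h2]
          ring
        · simp only [if_neg h1, if_neg h2]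
          ring
    rw [Finset.sum_congr rfl (fun j _ => hsummand j), Finset.sum_add_distrib,
      Finset.sum_ite_eq Finset.univ, Finset.sum_ite_eq Finset.univ,
      if_pos (Finset.mem_univ _), if_pos (Finset.mem_univ _), hDE1, hDE2, hval1]
    ring
  · -- second bracket
    simp only [pb]
    rw [hH2.fderiv, hg2.fderiv]
    have hsummand : ∀ j : Fin n,
        (DE + dV2.comp Fst) (Pi.single j 1, 0) *
            ((1/2 : ℝ) • (x.2 ⟨n - i - 1, by omega⟩ • Pp ⟨n - i - 1, by omega⟩
              + x.2 ⟨n - i - 1, by omega⟩ • Pp ⟨n - i - 1, by omega⟩)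
              + (x.1 ⟨0, by omega⟩ • Pq ⟨0, by omega⟩ + x.1 ⟨0, by omega⟩ • Pq ⟨0, by omega⟩))
              (0, Pi.single j 1)
          - (DE + dV2.comp Fst) (0, Pi.single j 1) *
            ((1/2 : ℝ) • (x.2 ⟨n - i - 1, by omega⟩ • Pp ⟨n - i - 1, by omega⟩
              + x.2 ⟨n - i - 1, by omega⟩ • Pp ⟨n - i - 1, by omega⟩)
              + (x.1 ⟨0, by omega⟩ • Pq ⟨0, by omega⟩ + x.1 ⟨0, by omega⟩ • Pq ⟨0, by omega⟩))
              (Pi.single j 1, 0)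
        = (if (⟨n - i - 1, by omega⟩ : Fin n) = j then
              (DE (Pi.single ⟨n - i - 1, by omega⟩ 1, 0)
                + dV2 (Pi.single ⟨n - i - 1, by omega⟩ 1)) * x.2 ⟨n - i - 1, by omega⟩ else 0)
          + (if (⟨0, by omega⟩ : Fin n) = j then
              -(DE (0, Pi.single ⟨0, by omega⟩ 1) * (2 * x.1 ⟨0, by omega⟩)) else 0) := by
      intro j
      simp only [ContinuousLinearMap.add_apply, ContinuousLinearMap.sub_apply,
        ContinuousLinearMap.smul_apply, ContinuousLinearMap.comp_apply,
        ContinuousLinearMap.coe_fst', ContinuousLinearMap.coe_snd',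
        ContinuousLinearMap.proj_apply, smul_eq_mul, map_zero, Pi.single_apply,
        Pi.zero_apply, Pp, Pq, Fst]
      by_cases h1 : (⟨n - i - 1, by omega⟩ : Fin n) = j
      · by_cases h2 : (⟨0, by omega⟩ : Fin n) = j
        · simp only [if_pos h1, if_pos h2]
          rw [h2.trans h1.symm, ← h1]
          ring
        · simp only [if_pos h1, if_neg h2]
          rw [← h1]
          ring
      · by_cases h2 : (⟨0, by omega⟩ : Fin n) = j
        · simp only [if_neg h1, if_pos h2]
          rw [← h2]
          ring
        · simp only [if_neg h1, if_neg h2]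
          ring
    rw [Finset.sum_congr rfl (fun j _ => hsummand j), Finset.sum_add_distrib,
      Finset.sum_ite_eq Finset.univ, Finset.sum_ite_eq Finset.univ,
      if_pos (Finset.mem_univ _), if_pos (Finset.mem_univ _), hDE1, hDE2, hval2]
    have hq1 : qext n x.1 1 = x.1 ⟨0, by omega⟩ := by
      rw [qext_eq_coord (by norm_num) (by omega)]
      exact congrArg x.1 (Fin.ext (by simp only [Fin.val_mk]; omega))
    rw [hq1]
    ring
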